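/- Let r ≥ 0, let D₀, …, D_r : S → ℤ/2ℤ and N₀, …, N_r ∈ ℤ satisfy: (a) w(D_{i−1} − D_i) + |N_{i−1} − N_i| = 1 for every 1 ≤ i ≤ r; (b) N_r = N₀; and (c) there is a set O of orbits of φ on S such that the set {s ∈ S : D_r(s) ≠ Fr(D₀)(s)} contains exactly one element of each orbit in O and no element of any orbit not in O. Then r ≥ card(O). -/

import Mathlib

/-!
On an orbit `T ∈ O` exactly one term of `∑_{s ∈ T} (D_r(s) - D₀(φ⁻¹ s))` is nonzero, so the sum
is `1` in `ℤ/2ℤ`; as `T` is `φ`-stable it equals `∑_{s ∈ T} (D_r(s) - D₀(s))`, so `D_r` and `D₀`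
differ somewhere on `T`. Distinct orbits being disjoint, the Hamming distance of `D₀` and `D_r` is
at least `card O`, while by (a) and the triangle inequality it is at most `r`.
-/

open Finset

theorem ncard_setOf_ne_eq_hammingDist {ι : Type*} [Fintype ι] {β : ι → Type*}
    [∀ i, DecidableEq (β i)] (x y : ∀ i, β i) :
    {i | x i ≠ y i}.ncard = hammingDist x y := by
  rw [hammingDist, ← Set.ncard_coe_finset, coe_filter_univ]

theorem hammingDist_le_of_hammingDist_succ_le_one {ι : Type*} [Fintype ι] {β : ι → Type*}
    [∀ i, DecidableEq (β i)] {r : ℕ} (D : Fin (r + 1) → ∀ i, β i)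
    (hD : ∀ j : Fin r, hammingDist (D j.castSucc) (D j.succ) ≤ 1) (i : Fin (r + 1)) :
    hammingDist (D 0) (D i) ≤ i := by
  induction i using Fin.induction with
  | zero => simp
  | succ j ih =>
    have := hammingDist_triangle (D 0) (D j.castSucc) (D j.succ)
    have := hD j
    simp only [Fin.val_castSucc] at ih
    simp only [Fin.val_succ]
    omega

theorem sum_perm_symm_apply_eq_sum {S M : Type*} [AddCommMonoid M] (φ : Equiv.Perm S)
    {T : Finset S} (hT : ∀ s, φ s ∈ T ↔ s ∈ T) (g : S → M) :
    ∑ s ∈ T, g (φ⁻¹ s) = ∑ s ∈ T, g s :=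
  sum_equiv φ⁻¹ (fun s => by simpa using hT (φ⁻¹ s)) (fun _ _ => rfl)

theorem exists_ne_of_existsUnique_ne_perm_symm_apply {S : Type*} (φ : Equiv.Perm S)
    {T : Finset S} (hT : ∀ s, φ s ∈ T ↔ s ∈ T) {f g : S → ZMod 2}
    (h : ∃! s, s ∈ T ∧ f s ≠ g (φ⁻¹ s)) : ∃ s ∈ T, f s ≠ g s := by
  by_contra! hfg
  obtain ⟨s₀, ⟨hs₀, hne⟩, huniq⟩ := h
  have hone : ∑ s ∈ T, (f s - g (φ⁻¹ s)) = 1 := by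
    rw [sum_eq_single_of_mem s₀ hs₀]
    · exact Fin.eq_one_of_ne_zero _ (sub_ne_zero.mpr hne)
    · intro s hs hs₀
      by_contra hsub
      exact hs₀ (huniq s ⟨hs, sub_ne_zero.mp hsub⟩)
  have hzero : ∑ s ∈ T, (f s - g (φ⁻¹ s)) = 0 := by
    rw [sum_sub_distrib, sum_perm_symm_apply_eq_sum φ hT, ← sum_sub_distrib]
    exact sum_eq_zero fun s hs => sub_eq_zero.mpr (hfg s hs)
  exact one_ne_zero (hone.symm.trans hzero)

namespace Equiv.Perm

variable {S : Type*} {φ : Equiv.Perm S}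

theorem SameCycle.setOf_sameCycle_eq {a s : S} (h : φ.SameCycle a s) :
    {t | φ.SameCycle a t} = {t | φ.SameCycle s t} :=
  Set.ext fun _ => ⟨h.symm.trans, h.trans⟩

theorem exists_sameCycle_ne_of_existsUnique [Fintype S] {a : S} {f g : S → ZMod 2}
    (h : ∃! s, φ.SameCycle a s ∧ f s ≠ g (φ⁻¹ s)) : ∃ s, φ.SameCycle a s ∧ f s ≠ g s := by
  classical
  simpa using exists_ne_of_existsUnique_ne_perm_symm_apply φ (T := {t | φ.SameCycle a t})
    (by simp [sameCycle_apply_right]) (by simpa using h)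

end Equiv.Perm

theorem stmt_11 {S : Type*} [Fintype S] (φ : Equiv.Perm S) (r : ℕ)
    (D : Fin (r + 1) → S → ZMod 2) (N : Fin (r + 1) → ℤ)
    (ha : ∀ i : Fin r,
      {s : S | D i.castSucc s ≠ D i.succ s}.ncard + (N i.castSucc - N i.succ).natAbs = 1)
    (O : Finset (Set S))
    (hOrb : ∀ T ∈ O, ∃ s : S, T = {t : S | φ.SameCycle s t})
    (hone : ∀ T ∈ O, ∃! s : S, s ∈ T ∧ D (Fin.last r) s ≠ D 0 (φ⁻¹ s)) :
    O.card ≤ r := by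
  classical
  set A := {s | D 0 s ≠ D (Fin.last r) s}
  have hOA : (O : Set (Set S)) ⊆ (fun s => {t | φ.SameCycle s t}) '' A := by
    intro T hT
    obtain ⟨a, rfl⟩ := hOrb T hT
    obtain ⟨s, has, hs⟩ := φ.exists_sameCycle_ne_of_existsUnique (hone _ hT)
    exact ⟨s, hs.symm, has.setOf_sameCycle_eq.symm⟩
  have hA : A.ncard ≤ r := by
    rw [ncard_setOf_ne_eq_hammingDist]
    refine hammingDist_le_of_hammingDist_succ_le_one D (fun j => ?_) (Fin.last r)
    have := ha j
    rw [← ncard_setOf_ne_eq_hammingDist]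
    omega
  calc O.card = (O : Set (Set S)).ncard := (Set.ncard_coe_finset O).symm
    _ ≤ ((fun s => {t | φ.SameCycle s t}) '' A).ncard := Set.ncard_le_ncard hOA
    _ ≤ A.ncard := Set.ncard_image_le
    _ ≤ r := hA
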